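/- arXiv:2110.01277 — 7 statements merged into one kernel-verified Lean document; each statement's English description precedes it below -/
import Mathlib

section
/- Define matrices over a field F recursively by A₁ = [[0,-1],[1,0]], B₁ = [[1,-1],[-1,1]], A_{i+1} = [[A₁, Bᵢ],[−Bᵢᵀ, Aᵢ]], B_{i+1} = [B₁ Bᵢ]. Then det(Aᵢ) = 1 for every positive integer i. -/
def A1 (F : Type*) [Field F] : Matrix (Fin 2) (Fin 2) F := !![0, -1; 1, 0]
def B1 (F : Type*) [Field F] : Matrix (Fin 2) (Fin 2) F := !![1, -1; -1, 1]

/-- `Bmat F i` is the horizontal concatenation of `i` copies of `B1`. -/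
def Bmat (F : Type*) [Field F] (i : ℕ) : Matrix (Fin 2) (Fin (2 * i)) F :=
  fun a b => B1 F a ⟨b.val % 2, Nat.mod_lt _ (by norm_num)⟩

def Amat (F : Type*) [Field F] : (i : ℕ) → Matrix (Fin (2 * i)) (Fin (2 * i)) F
  | 0 => 0
  | 1 => Matrix.reindex (finCongr (by norm_num)) (finCongr (by norm_num)) (A1 F)
  | (i + 2) =>
      Matrix.reindex (finSumFinEquiv.trans (finCongr (by omega)))
        (finSumFinEquiv.trans (finCongr (by omega)))
        (Matrix.fromBlocks (A1 F) (Bmat F (i + 1)) (-(Bmat F (i + 1)).transpose) (Amat F (i + 1)))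

lemma B1_one (F : Type*) [Field F] (x : Fin 2) : B1 F 1 x = - B1 F 0 x := by
  fin_cases x <;> simp [B1]

lemma Bmat_one (F : Type*) [Field F] (n : ℕ) (a : Fin (2 * n)) :
    Bmat F n 1 a = - Bmat F n 0 a := by
  simp [Bmat, B1_one]

lemma A1_leftinv (F : Type*) [Field F] : (!![0, 1; -1, 0] : Matrix (Fin 2) (Fin 2) F) * A1 F = 1 := by
  rw [A1, Matrix.mul_fin_two, Matrix.one_fin_two]
  norm_num

noncomputable instance A1_inv (F : Type*) [Field F] : Invertible (A1 F) :=
  invertibleOfLeftInverse _ _ (A1_leftinv F)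

lemma schur_zero (F : Type*) [Field F] (n : ℕ) :
    (-(Bmat F n).transpose) * ⅟(A1 F) * Bmat F n = 0 := by
  rw [invOf_eq_left_inv (A1_leftinv F)]
  ext a b
  simp [Matrix.mul_apply, Fin.sum_univ_two, Matrix.transpose_apply, Bmat_one]

theorem Amat_det (F : Type*) [Field F] (i : ℕ) (hi : 1 ≤ i) :
    (Amat F i).det = 1 := by
  induction i with
  | zero => omega
  | succ n ih =>
    match n, ih with
    | 0, _ =>
      show (Amat F 1).det = 1
      rw [Amat, Matrix.det_reindex_self]
      simp [A1, Matrix.det_fin_two_of]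
    | (m + 1), ih =>
      rw [Amat, Matrix.det_reindex_self, Matrix.det_fromBlocks₁₁,
        schur_zero, sub_zero, ih (by omega)]
      simp [A1, Matrix.det_fin_two_of]
end

section
/- With Aᵢ defined recursively by A₁ = [[0,-1],[1,0]], A_{i+1} = [[A₁, Bᵢ],[−Bᵢᵀ, Aᵢ]] (where Bᵢ is the concatenation of i copies of [[1,-1],[-1,1]]), every column of Aᵢ has Hamming weight exactly 2i−1, i.e. exactly one entry of each column is zero, provided F has characteristic 0 (or more generally the nonzero entries ±1 remain nonzero). -/
/-!
The zero entries of `Amat F i` are exactly its diagonal entries: the off-diagonal blocks `Bᵢ` and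
`-Bᵢᵀ` consist of `±1`, and the diagonal blocks `A₁` and `Aᵢ` have zeros exactly on the diagonal
(the latter by induction). Hence every column of `Amat F i` has exactly one zero among its `2 i`
entries.
-/

open scoped Classical in
noncomputable def wt {F : Type*} [Field F] {m : ℕ} (v : Fin m → F) : ℕ :=
  (Finset.univ.filter fun p => v p ≠ 0).card

open Matrix

lemma fromBlocks_eq_zero_iff_eq {α β R : Type*} [Zero R] {A : Matrix α α R} {B : Matrix α β R}
    {C : Matrix β α R} {D : Matrix β β R} (hA : ∀ a b, A a b = 0 ↔ a = b)
    (hB : ∀ a b, B a b ≠ 0) (hC : ∀ b a, C b a ≠ 0) (hD : ∀ a b, D a b = 0 ↔ a = b) :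
    ∀ x y, fromBlocks A B C D x y = 0 ↔ x = y := by
  rintro (a | b) (a' | b') <;> simp [hA, hB, hC, hD]

lemma reindex_eq_zero_iff_eq {α β R : Type*} [Zero R] {M : Matrix α α R} (e : α ≃ β)
    (hM : ∀ a b, M a b = 0 ↔ a = b) (x y : β) : reindex e e M x y = 0 ↔ x = y := by
  rw [reindex_apply, submatrix_apply, hM, e.symm.injective.eq_iff]

section

variable {F : Type*} [Field F]

lemma A1_eq_zero_iff_eq (a b : Fin 2) : A1 F a b = 0 ↔ a = b := by
  fin_cases a <;> fin_cases b <;> simp [A1]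

lemma B1_ne_zero (a b : Fin 2) : B1 F a b ≠ 0 := by
  fin_cases a <;> fin_cases b <;> simp [B1]

lemma Bmat_ne_zero (i : ℕ) (a : Fin 2) (b : Fin (2 * i)) : Bmat F i a b ≠ 0 :=
  B1_ne_zero _ _

lemma Amat_eq_zero_iff_eq : ∀ (i : ℕ) (r j : Fin (2 * i)), Amat F i r j = 0 ↔ r = j
  | 0, r, _ => r.elim0
  | 1, r, j => by
    rw [Amat]
    exact reindex_eq_zero_iff_eq _ A1_eq_zero_iff_eq r j
  | i + 2, r, j => by
    rw [Amat]
    exact reindex_eq_zero_iff_eq _ (fromBlocks_eq_zero_iff_eq A1_eq_zero_iff_eq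
      (Bmat_ne_zero _) (fun b a => neg_ne_zero.mpr (Bmat_ne_zero _ a b))
      (Amat_eq_zero_iff_eq (i + 1))) r j

end

theorem Amat_col_weight_general (F : Type*) [Field F] (i : ℕ) (j : Fin (2 * i)) :
    wt (fun r => Amat F i r j) = 2 * i - 1 := by
  classical
  have hzeros : (Finset.univ.filter fun r => Amat F i r j ≠ 0) = Finset.univ.erase j := by
    simp only [ne_eq, Amat_eq_zero_iff_eq, Finset.filter_ne']
  rw [wt, hzeros, Finset.card_erase_of_mem (Finset.mem_univ j), Finset.card_univ,
    Fintype.card_fin]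

theorem Amat_col_weight (F : Type*) [Field F] (i : ℕ) (hi : 1 ≤ i) (j : Fin (2 * i)) :
    wt (fun r => Amat F i r j) = 2 * i - 1 :=
  Amat_col_weight_general F i j
end

section
/- Let Aᵢ = [a₁,…,a_{2i}] be the recursively defined matrix as above. Then the sum of the first 2i−1 columns, Σ_{j=1}^{2i−1} aⱼ, equals the standard basis vector (0,…,0,1)ᵀ ∈ F^{2i}. -/
/-!
With `v` the vector whose entries are `1` except for a final `0`, the claim is `Aᵢ v = e_{2i}`.
In the block form of `A_{i+1}`, `v` restricts to `(1, 1)` on the first block and to the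
analogous vector on the second. Consecutive column pairs of `Bᵢ` cancel, so `Bᵢ` applied to
the truncated ones vector is the first column of `B₁`, which cancels `A₁ (1, 1)`; the columns
of `B₁` sum to zero, so `-Bᵢᵀ (1, 1) = 0` and the lower block reduces to `Aᵢ v`.
-/

open Matrix

section

variable (F : Type*) [Field F]

def onesExceptLast (i : ℕ) : Fin (2 * i) → F := fun j => if (j : ℕ) < 2 * i - 1 then 1 else 0

def blockEquiv (k : ℕ) : Fin 2 ⊕ Fin (2 * (k + 1)) ≃ Fin (2 * (k + 2)) :=
  finSumFinEquiv.trans (finCongr (by omega))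

theorem Amat_add_two (k : ℕ) :
    Amat F (k + 2) = reindex (blockEquiv k) (blockEquiv k)
      (fromBlocks (A1 F) (Bmat F (k + 1)) (-(Bmat F (k + 1)).transpose) (Amat F (k + 1))) :=
  rfl

theorem blockEquiv_inl (k : ℕ) (a : Fin 2) : (blockEquiv k (.inl a) : ℕ) = a := rfl

theorem blockEquiv_inr (k : ℕ) (c : Fin (2 * (k + 1))) :
    (blockEquiv k (.inr c) : ℕ) = 2 + c :=
  rfl

theorem onesExceptLast_comp_blockEquiv (k : ℕ) :
    onesExceptLast F (k + 2) ∘ blockEquiv k =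
      Sum.elim (1 : Fin 2 → F) (onesExceptLast F (k + 1)) := by
  ext (a | c)
  · simp only [onesExceptLast, Function.comp_apply, blockEquiv_inl, Sum.elim_inl]
    exact if_pos (by omega)
  · simp only [onesExceptLast, Function.comp_apply, blockEquiv_inr, Sum.elim_inr]
    exact if_congr (by omega) rfl rfl

theorem B1_row_sum (a : Fin 2) : B1 F a 0 + B1 F a 1 = 0 := by
  fin_cases a <;> simp [B1]

theorem B1_col_sum (b : Fin 2) : B1 F 0 b + B1 F 1 b = 0 := by
  fin_cases b <;> simp [B1]

theorem sum_range_B1_mod_two (a : Fin 2) (k : ℕ) :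
    ∑ m ∈ Finset.range (2 * k + 1), B1 F a ⟨m % 2, Nat.mod_lt _ two_pos⟩ = B1 F a 0 := by
  induction k with
  | zero => simp
  | succ k ih =>
    rw [show 2 * (k + 1) + 1 = 2 * k + 1 + 1 + 1 by ring, Finset.sum_range_succ,
      Finset.sum_range_succ, ih, add_assoc]
    have h1 : (2 * k + 1) % 2 = 1 := by omega
    have h2 : (2 * k + 1 + 1) % 2 = 0 := by omega
    simp only [h1, h2]
    change B1 F a 0 + (B1 F a 1 + B1 F a 0) = B1 F a 0
    linear_combination B1_row_sum F a

theorem Bmat_mulVec_onesExceptLast (k : ℕ) :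
    Bmat F (k + 1) *ᵥ onesExceptLast F (k + 1) = fun a => B1 F a 0 := by
  ext a
  simp only [mulVec, dotProduct, onesExceptLast, Bmat, mul_ite, mul_one, mul_zero]
  rw [Fin.sum_univ_eq_sum_range
      (fun m => if m < 2 * (k + 1) - 1 then B1 F a ⟨m % 2, Nat.mod_lt _ two_pos⟩ else 0),
    show 2 * (k + 1) = 2 * k + 1 + 1 by ring, Finset.sum_range_succ, if_neg (by omega), add_zero,
    ← sum_range_B1_mod_two F a k]
  exact Finset.sum_congr rfl fun m hm => if_pos (by simp at hm; omega)

theorem Bmat_transpose_mulVec_one (n : ℕ) : (Bmat F n)ᵀ *ᵥ 1 = 0 := by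
  ext c
  simp [mulVec, dotProduct, Fin.sum_univ_two, Bmat, B1_col_sum]

theorem A1_mulVec_one_add_B1_col_zero : A1 F *ᵥ 1 + (fun a => B1 F a 0) = 0 := by
  ext a
  fin_cases a <;> simp [A1, B1, dotProduct, Fin.sum_univ_two]

theorem Amat_mulVec_onesExceptLast (k : ℕ) :
    Amat F (k + 1) *ᵥ onesExceptLast F (k + 1) =
      fun r : Fin (2 * (k + 1)) => if (r : ℕ) = 2 * (k + 1) - 1 then (1 : F) else 0 := by
  induction k with
  | zero =>
    ext r
    fin_cases r <;> simp [Amat, A1, onesExceptLast, mulVec, dotProduct]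
  | succ k ih =>
    ext r
    obtain ⟨x, rfl⟩ := (blockEquiv k).surjective r
    rw [Amat_add_two, reindex_apply, submatrix_mulVec_equiv, Equiv.symm_symm,
      onesExceptLast_comp_blockEquiv, fromBlocks_mulVec, Function.comp_apply,
      Equiv.symm_apply_apply]
    rcases x with a | c
    · rw [Sum.elim_inl, Sum.elim_comp_inl, Sum.elim_comp_inr, Bmat_mulVec_onesExceptLast,
        A1_mulVec_one_add_B1_col_zero, blockEquiv_inl, if_neg (by omega), Pi.zero_apply]
    · rw [Sum.elim_inr, Sum.elim_comp_inl, Sum.elim_comp_inr, neg_mulVec,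
        Bmat_transpose_mulVec_one, neg_zero, zero_add, ih, blockEquiv_inr]
      exact if_congr (by omega) rfl rfl

end

theorem Amat_col_sum (F : Type*) [Field F] (i : ℕ) (hi : 1 ≤ i) (r : Fin (2 * i)) :
    (∑ j ∈ Finset.univ.filter (fun j : Fin (2 * i) => (j : ℕ) < 2 * i - 1),
        Amat F i r j) = (if (r : ℕ) = 2 * i - 1 then (1 : F) else 0) := by
  obtain ⟨k, rfl⟩ := Nat.exists_eq_add_of_le' hi
  rw [Finset.sum_filter]
  simpa [mulVec, dotProduct, onesExceptLast] using congrFun (Amat_mulVec_onesExceptLast F k) r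
end

section
/- With the construction of the previous context, every nonzero codeword w = Σ c_t a′_t of the new code Code(B) has Hamming weight at least k·d, where d is the minimum distance of C. Hence the minimum distance d′ of Code(B) satisfies d′ ≥ k·d. -/
/-- `d` is the minimum distance of the linear code `C`. -/
noncomputable def IsMinDist {F : Type*} [Field F] {m : ℕ} (C : Submodule F (Fin m → F)) (d : ℕ) : Prop :=
  (∀ w ∈ C, w ≠ 0 → d ≤ wt w) ∧ ∃ w ∈ C, w ≠ 0 ∧ wt w = d

/-- The cyclic-shift vectors of Construction 3.2: `shiftVec n k a t` is the vector in
`F^{(k+1)n}` whose `(k+1)` blocks of size `n` are zero in block `t` and the vectors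
`a 0, ..., a (k-1)` read cyclically in the remaining blocks. -/
def shiftVec {F : Type*} [Field F] (n k : ℕ) (a : Fin k → Fin n → F) (t : Fin (k + 1)) :
    Fin ((k + 1) * n) → F :=
  fun p =>
    if h : p.val / n = t.val then 0
    else
      have hn : 0 < n := by
        rcases Nat.eq_zero_or_pos n with h0 | h0
        · exact absurd p.isLt (by simp [h0])
        · exact h0
      have hi : p.val / n < k + 1 :=
        Nat.div_lt_of_lt_mul (Nat.mul_comm (k + 1) n ▸ p.isLt)
      a ⟨(if t.val ≤ p.val / n then p.val / n - t.val else p.val / n + (k + 1) - t.val) - 1,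
          by
            have ht := t.isLt
            generalize hq : p.val / n = q at h hi ⊢
            split_ifs with h2 <;> omega⟩
        ⟨p.val % n, Nat.mod_lt _ hn⟩

namespace ShiftAux

/-- The position of the `j`-th entry of block `b`. -/
def pos (n k : ℕ) (b : Fin (k + 1)) (j : Fin n) : Fin ((k + 1) * n) :=
  ⟨b.val * n + j.val, by
    calc b.val * n + j.val < (b.val + 1) * n := by
          rw [add_mul, one_mul]; exact Nat.add_lt_add_left j.isLt _
      _ ≤ (k + 1) * n := Nat.mul_le_mul_right n b.isLt⟩

lemma pos_val_div {n k : ℕ} (hn : 0 < n) (b : Fin (k + 1)) (j : Fin n) :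
    (pos n k b j).val / n = b.val := by
  show (b.val * n + j.val) / n = b.val
  rw [Nat.mul_comm b.val n, Nat.mul_add_div hn, Nat.div_eq_of_lt j.isLt, Nat.add_zero]

lemma pos_val_mod {n k : ℕ} (b : Fin (k + 1)) (j : Fin n) :
    (pos n k b j).val % n = j.val := by
  show (b.val * n + j.val) % n = j.val
  rw [Nat.mul_comm b.val n, Nat.mul_add_mod, Nat.mod_eq_of_lt j.isLt]

/-- cyclic reindexing: `rho k b t = (b + k - t) mod (k+1)`. -/
def rho (k : ℕ) (b t : Fin (k + 1)) : Fin (k + 1) :=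
  ⟨(b.val + k - t.val) % (k + 1), Nat.mod_lt _ (Nat.succ_pos k)⟩

lemma rho_rho {k : ℕ} (b t : Fin (k + 1)) : rho k b (rho k b t) = t := by
  apply Fin.ext
  show (b.val + k - (b.val + k - t.val) % (k + 1)) % (k + 1) = t.val
  have hb := b.isLt
  have ht := t.isLt
  have h1 := Nat.div_add_mod (b.val + k - t.val) (k + 1)
  set Q := (k + 1) * ((b.val + k - t.val) / (k + 1)) with hQ
  have h2 : b.val + k - (b.val + k - t.val) % (k + 1) = t.val + Q := by
    have := Nat.mod_lt (b.val + k - t.val) (Nat.succ_pos k)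
    omega
  rw [h2, hQ, Nat.add_mul_mod_self_left, Nat.mod_eq_of_lt (by omega)]

lemma rho_involutive (k : ℕ) (b : Fin (k + 1)) : Function.Involutive (rho k b) :=
  fun t => rho_rho b t

lemma rho_self {k : ℕ} (b : Fin (k + 1)) : rho k b b = Fin.last k := by
  apply Fin.ext
  show (b.val + k - b.val) % (k + 1) = k
  have : b.val + k - b.val = k := by omega
  rw [this, Nat.mod_eq_of_lt (by omega)]

lemma shiftVec_rho_pos {F : Type*} [Field F] {n k : ℕ} (hn : 0 < n)
    (a : Fin k → Fin n → F) (b t : Fin (k + 1)) (j : Fin n) :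
    shiftVec n k a (rho k b t) (pos n k b j) =
      if h : t.val < k then a ⟨t.val, h⟩ j else 0 := by
  by_cases h : t.val < k
  · rw [dif_pos h]
    have hne : ¬ ((pos n k b j).val / n = (rho k b t).val) := by
      rw [pos_val_div hn]
      intro hEq
      have hEq' : b.val = (b.val + k - t.val) % (k + 1) := hEq
      have hb := b.isLt
      have ht := t.isLt
      have hdm := Nat.div_add_mod (b.val + k - t.val) (k + 1)
      have hqlt : (b.val + k - t.val) / (k + 1) < 2 :=
        Nat.div_lt_of_lt_mul (by omega)
      set q := (b.val + k - t.val) / (k + 1) with hq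
      interval_cases q <;> omega
    simp only [shiftVec]
    rw [dif_neg hne]
    refine congr (congrArg a (Fin.ext ?_)) (Fin.ext ?_)
    · show (if (rho k b t).val ≤ (pos n k b j).val / n then
          (pos n k b j).val / n - (rho k b t).val
        else (pos n k b j).val / n + (k + 1) - (rho k b t).val) - 1 = t.val
      rw [pos_val_div hn]
      have hb := b.isLt
      have ht := t.isLt
      set r := (rho k b t).val with hrdef
      have hrlt : r < k + 1 := (rho k b t).isLt
      have hrval : r = (b.val + k - t.val) % (k + 1) := rfl
      have hdm := Nat.div_add_mod (b.val + k - t.val) (k + 1)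
      rw [← hrval] at hdm
      have hqlt : (b.val + k - t.val) / (k + 1) < 2 :=
        Nat.div_lt_of_lt_mul (by omega)
      set q := (b.val + k - t.val) / (k + 1) with hq
      interval_cases q <;> split_ifs with h2 <;> omega
    · exact pos_val_mod b j
  · rw [dif_neg h]
    have ht : t.val = k := by have := t.isLt; omega
    have hbt : rho k b t = b := by
      apply Fin.ext
      show (b.val + k - t.val) % (k + 1) = b.val
      rw [ht]
      have : b.val + k - k = b.val := by omega
      rw [this, Nat.mod_eq_of_lt b.isLt]
    rw [hbt]
    simp only [shiftVec]
    rw [dif_pos (pos_val_div hn b j)]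

lemma sum_apply_pos {F : Type*} [Field F] {n k : ℕ} (hn : 0 < n)
    (a : Fin k → Fin n → F) (c : Fin (k + 1) → F) (b : Fin (k + 1)) (j : Fin n) :
    (∑ t, c t • shiftVec n k a t) (pos n k b j) =
      ∑ i : Fin k, c (rho k b i.castSucc) * a i j := by
  rw [Finset.sum_apply]
  simp only [Pi.smul_apply, smul_eq_mul]
  rw [← Fintype.sum_bijective (rho k b) (rho_involutive k b).bijective
      (fun t => c (rho k b t) * shiftVec n k a (rho k b t) (pos n k b j))
      (fun t => c t * shiftVec n k a t (pos n k b j))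
      (fun t => rfl)]
  rw [Fin.sum_univ_castSucc]
  have hlast : shiftVec n k a (rho k b (Fin.last k)) (pos n k b j) = 0 := by
    rw [shiftVec_rho_pos hn]
    rw [dif_neg (by simp)]
  rw [hlast, mul_zero, add_zero]
  refine Finset.sum_congr rfl fun i _ => ?_
  have hci : (Fin.castSucc i).val < k := i.isLt
  rw [shiftVec_rho_pos hn, dif_pos hci]
  congr 1

open scoped Classical in
lemma wt_eq_sum {F : Type*} [Field F] {n k : ℕ} (hn : 0 < n)
    (w : Fin ((k + 1) * n) → F) :
    wt w = ∑ b : Fin (k + 1), wt (fun j => w (pos n k b j)) := by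
  classical
  unfold wt
  have hdivlt : ∀ p : Fin ((k + 1) * n), p.val / n < k + 1 := fun p =>
    Nat.div_lt_of_lt_mul (Nat.mul_comm (k + 1) n ▸ p.isLt)
  rw [Finset.card_eq_sum_card_fiberwise
    (f := fun p : Fin ((k + 1) * n) => (⟨p.val / n, hdivlt p⟩ : Fin (k + 1)))
    (t := Finset.univ) (fun x _ => Finset.mem_univ _)]
  refine Finset.sum_congr rfl fun b _ => ?_
  refine Finset.card_nbij' (fun p => (⟨p.val % n, Nat.mod_lt _ hn⟩ : Fin n))
    (fun j => pos n k b j) ?_ ?_ ?_ ?_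
  · intro p hp
    simp only [Finset.mem_coe, Finset.mem_filter, Finset.mem_univ, true_and] at hp ⊢
    obtain ⟨hp1, hp2⟩ := hp
    have hdiv : p.val / n = b.val := congrArg Fin.val hp2
    have hpos : pos n k b ⟨p.val % n, Nat.mod_lt _ hn⟩ = p := by
      apply Fin.ext
      show b.val * n + p.val % n = p.val
      have h1 := Nat.div_add_mod p.val n
      rw [hdiv] at h1
      rw [Nat.mul_comm]
      exact h1
    rw [hpos]
    exact hp1
  · intro j hj
    simp only [Finset.mem_coe, Finset.mem_filter, Finset.mem_univ, true_and] at hj ⊢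
    exact ⟨hj, Fin.ext (pos_val_div hn b j)⟩
  · intro p hp
    simp only [Finset.mem_coe, Finset.mem_filter, Finset.mem_univ, true_and] at hp
    obtain ⟨_, hp2⟩ := hp
    have hdiv : p.val / n = b.val := congrArg Fin.val hp2
    apply Fin.ext
    show b.val * n + p.val % n = p.val
    have h1 := Nat.div_add_mod p.val n
    rw [hdiv] at h1
    rw [Nat.mul_comm]
    exact h1
  · intro j _
    exact Fin.ext (pos_val_mod b j)

end ShiftAux

theorem shiftVec_weight_lower_bound (F : Type*) [Field F] (n k : ℕ)
    (a : Fin k → Fin n → F) (ha : LinearIndependent F a) (d : ℕ)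
    (hd : IsMinDist (Submodule.span F (Set.range a)) d) :
    ∀ w ∈ Submodule.span F (Set.range (shiftVec n k a)), w ≠ 0 → k * d ≤ wt w := by
  classical
  intro w hw hw0
  rcases Nat.eq_zero_or_pos n with hn | hn
  · exact absurd (funext fun p => absurd p.isLt (by simp [hn])) hw0
  obtain ⟨c, hc⟩ := (Submodule.mem_span_range_iff_exists_fun F).mp hw
  have hex : ∃ t0, c t0 ≠ 0 := by
    by_contra hcon
    push_neg at hcon
    exact hw0 (by rw [← hc]; simp [hcon])
  obtain ⟨t0, ht0⟩ := hex
  set blk : Fin (k + 1) → Fin n → F := fun b j => w (ShiftAux.pos n k b j) with hblk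
  have hblkeq : ∀ b, blk b = fun j => ∑ i : Fin k,
      c (ShiftAux.rho k b i.castSucc) * a i j := by
    intro b
    funext j
    show w (ShiftAux.pos n k b j) = _
    rw [← hc]
    exact ShiftAux.sum_apply_pos hn a c b j
  have hmem : ∀ b, blk b ∈ Submodule.span F (Set.range a) := by
    intro b
    rw [hblkeq b]
    have : (fun j => ∑ i : Fin k, c (ShiftAux.rho k b i.castSucc) * a i j)
        = ∑ i : Fin k, c (ShiftAux.rho k b i.castSucc) • a i := by
      funext j
      rw [Finset.sum_apply]
      simp [Pi.smul_apply, smul_eq_mul]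
    rw [this]
    exact Submodule.sum_mem _ fun i _ =>
      Submodule.smul_mem _ _ (Submodule.subset_span ⟨i, rfl⟩)
  have hne : ∀ b, b ≠ t0 → blk b ≠ 0 := by
    intro b hb h0
    have hsum : ∑ i : Fin k, c (ShiftAux.rho k b i.castSucc) • a i = 0 := by
      funext j
      rw [Finset.sum_apply]
      have := congrFun (hblkeq b ▸ h0) j
      simpa [smul_eq_mul] using this
    have hall := Fintype.linearIndependent_iff.mp ha
      (fun i => c (ShiftAux.rho k b i.castSucc)) hsum
    have hlt : (ShiftAux.rho k b t0).val < k := by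
      by_contra hge
      have hlast : ShiftAux.rho k b t0 = Fin.last k :=
        Fin.ext (by have := (ShiftAux.rho k b t0).isLt; simp only [Fin.val_last]; omega)
      have : ShiftAux.rho k b t0 = ShiftAux.rho k b b := by
        rw [hlast, ShiftAux.rho_self]
      exact hb ((ShiftAux.rho_involutive k b).injective this).symm
    have hi0 := hall ⟨(ShiftAux.rho k b t0).val, hlt⟩
    apply ht0
    rw [← hi0]
    congr 1
    have hcs : (Fin.castSucc ⟨(ShiftAux.rho k b t0).val, hlt⟩ : Fin (k + 1))
        = ShiftAux.rho k b t0 := Fin.ext rfl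
    rw [hcs, ShiftAux.rho_rho]
  have hwt : wt w = ∑ b : Fin (k + 1), wt (blk b) := ShiftAux.wt_eq_sum hn w
  have hdlb : ∀ b ∈ Finset.univ.erase t0, d ≤ wt (blk b) := fun b hb =>
    hd.1 (blk b) (hmem b) (hne b (Finset.ne_of_mem_erase hb))
  calc k * d = ∑ _b ∈ Finset.univ.erase t0, d := by
        rw [Finset.sum_const, smul_eq_mul,
          Finset.card_erase_of_mem (Finset.mem_univ _), Finset.card_univ, Fintype.card_fin]
        simp
    _ ≤ ∑ b ∈ Finset.univ.erase t0, wt (blk b) := Finset.sum_le_sum hdlb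
    _ ≤ ∑ b : Fin (k + 1), wt (blk b) :=
        Finset.sum_le_sum_of_subset (Finset.erase_subset _ _)
    _ = wt w := hwt.symm
end

section
/- Let C be an [n,k,d]-linear code over F with basis B = (a₁,…,a_k) such that every aⱼ has weight u, wt(Σⱼ aⱼ) = d, and u ≥ d(1 + 1/k) (i.e. C is u-bounded relative to B). Then the code Code(B) spanned by the cyclic-shift vectors a′₁,…,a′_{k+1} has minimum distance exactly (k+1)d. -/
/-- `C = span a` is `u`-bounded relative to the ordered basis `a`, with minimum distance `d`:
all basis vectors have weight `u`, their sum has weight `d`, and `u ≥ d(1 + 1/k)`. -/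
noncomputable def UBounded {F : Type*} [Field F] {n k : ℕ} (a : Fin k → Fin n → F)
    (u d : ℕ) : Prop :=
  IsMinDist (Submodule.span F (Set.range a)) d ∧
  (∀ j, wt (a j) = u) ∧ wt (∑ j, a j) = d ∧ d * (k + 1) ≤ u * k

/-! The `q`-th block of `∑ₜ cₜ a′ₜ` is the codeword `∑ⱼ c_{q-j-1} aⱼ` of `C`. If two coefficients
`cₜ` are nonzero, every block sees one of them, so by linear independence every block is a nonzero
codeword of weight at least `d`. If only `cₜ` is nonzero, the word is a multiple of `a′ₜ`, of weight
`k u ≥ (k + 1) d`. The bound is attained by `∑ₜ a′ₜ`, each of whose blocks is `∑ⱼ aⱼ`. -/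

section

variable {F : Type*} [Field F] {m n k : ℕ}

lemma wt_eq_zero_iff {v : Fin m → F} : wt v = 0 ↔ v = 0 := by
  classical
  simp [wt, Finset.filter_eq_empty_iff, funext_iff]

lemma wt_smul {c : F} (hc : c ≠ 0) (v : Fin m → F) : wt (c • v) = wt v := by
  classical
  unfold wt
  congr 1
  exact Finset.filter_congr fun p _ => by simp [hc]

lemma IsMinDist.ne_zero {d : ℕ} {C : Submodule F (Fin m → F)} (h : IsMinDist C d) : d ≠ 0 := by
  obtain ⟨w, -, hw0, rfl⟩ := h.2
  exact wt_eq_zero_iff.not.mpr hw0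

def block (w : Fin (m * n) → F) (q : Fin m) : Fin n → F :=
  fun i => w (finProdFinEquiv (q, i))

lemma wt_eq_sum_wt_block (w : Fin (m * n) → F) : wt w = ∑ q, wt (block w q) := by
  classical
  simp only [wt, Finset.card_filter]
  rw [← finProdFinEquiv.sum_comp, Fintype.sum_prod_type]
  rfl

lemma block_sum_smul {ι : Type*} [Fintype ι] (c : ι → F) (v : ι → Fin (m * n) → F)
    (q : Fin m) : block (∑ t, c t • v t) q = ∑ t, c t • block (v t) q := by
  ext i
  simp [block, Finset.sum_apply]

lemma finProdFinEquiv_div_mod (q : Fin m) (i : Fin n) :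
    (finProdFinEquiv (q, i) : ℕ) / n = q ∧ (finProdFinEquiv (q, i) : ℕ) % n = i := by
  have h := finProdFinEquiv.symm_apply_apply (q, i)
  rw [finProdFinEquiv_symm_apply, Prod.mk.injEq] at h
  exact ⟨by rw [← Fin.coe_divNat, h.1], by rw [← Fin.coe_modNat, h.2]⟩

lemma block_shiftVec (a : Fin k → Fin n → F) (t q : Fin (k + 1)) :
    block (shiftVec n k a t) q = if h : q = t then 0 else a ((q - t).pred (sub_ne_zero.mpr h)) := by
  ext i
  obtain ⟨hdiv, hmod⟩ := finProdFinEquiv_div_mod q i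
  by_cases h : q = t
  · rw [dif_pos h]
    simp only [block, shiftVec, dif_pos (hdiv.trans (congrArg Fin.val h)), Pi.zero_apply]
  · have h' : (finProdFinEquiv (q, i) : ℕ) / n ≠ t := by rw [hdiv]; exact Fin.val_ne_of_ne h
    rw [dif_neg h]
    simp only [block, shiftVec, dif_neg h']
    congr 1 <;> ext
    · simp only [Fin.val_pred, hdiv]
      split_ifs with hle
      · rw [Fin.coe_sub_iff_le.mpr hle]
      · rw [Fin.coe_sub_iff_lt.mpr (not_le.mp hle)]; omega
    · exact hmod

lemma block_shiftVec_self (a : Fin k → Fin n → F) (t : Fin (k + 1)) :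
    block (shiftVec n k a t) t = 0 := by
  simp [block_shiftVec]

lemma block_shiftVec_sub_succ (a : Fin k → Fin n → F) (q : Fin (k + 1)) (j : Fin k) :
    block (shiftVec n k a (q - j.succ)) q = a j := by
  have hq : q ≠ q - j.succ := fun h => j.succ_ne_zero (sub_eq_self.mp h.symm)
  simp [block_shiftVec, hq]

lemma sum_block_shiftVec {M : Type*} [AddCommMonoid M] (g : (Fin n → F) → M)
    (a : Fin k → Fin n → F) (t : Fin (k + 1)) :
    ∑ q, g (block (shiftVec n k a t) q) = g 0 + ∑ j, g (a j) := by
  rw [← Equiv.sum_comp (Equiv.addLeft t), Fin.sum_univ_succ]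
  simp [block_shiftVec, Fin.succ_ne_zero]

lemma block_sum_smul_shiftVec (a : Fin k → Fin n → F) (c : Fin (k + 1) → F)
    (q : Fin (k + 1)) : block (∑ t, c t • shiftVec n k a t) q = ∑ j, c (q - j.succ) • a j := by
  rw [block_sum_smul, ← Equiv.sum_comp (Equiv.subLeft q), Fin.sum_univ_succ]
  simp [block_shiftVec_self, block_shiftVec_sub_succ]

lemma wt_shiftVec {u : ℕ} {a : Fin k → Fin n → F} (hu : ∀ j, wt (a j) = u)
    (t : Fin (k + 1)) : wt (shiftVec n k a t) = k * u := by
  simp [wt_eq_sum_wt_block, sum_block_shiftVec, hu, wt_eq_zero_iff]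

lemma wt_sum_shiftVec (a : Fin k → Fin n → F) :
    wt (∑ t, shiftVec n k a t) = (k + 1) * wt (∑ j, a j) := by
  have hblock q : block (∑ t, shiftVec n k a t) q = ∑ j, a j := by
    simpa using block_sum_smul_shiftVec a (fun _ => 1) q
  simp [wt_eq_sum_wt_block, hblock]

lemma Fin.exists_sub_succ_eq {q t : Fin (k + 1)} (h : t ≠ q) :
    ∃ j : Fin k, q - j.succ = t := by
  obtain ⟨j, hj⟩ := Fin.exists_succ_eq.mpr (sub_ne_zero.mpr h.symm)
  exact ⟨j, by rw [hj, sub_sub_cancel]⟩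

lemma block_sum_smul_shiftVec_ne_zero {a : Fin k → Fin n → F}
    (ha : LinearIndependent F a) {c : Fin (k + 1) → F} {t q : Fin (k + 1)} (htq : t ≠ q)
    (hct : c t ≠ 0) : block (∑ t, c t • shiftVec n k a t) q ≠ 0 := by
  obtain ⟨j, rfl⟩ := Fin.exists_sub_succ_eq htq
  rw [block_sum_smul_shiftVec]
  exact fun h => hct (Fintype.linearIndependent_iff.mp ha _ h j)

lemma le_wt_sum_smul_shiftVec_of_two_ne_zero {d : ℕ} {a : Fin k → Fin n → F}
    (ha : LinearIndependent F a)
    (hC : IsMinDist (Submodule.span F (Set.range a)) d) {c : Fin (k + 1) → F} {t₀ t₁ : Fin (k + 1)}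
    (hne : t₀ ≠ t₁) (h₀ : c t₀ ≠ 0) (h₁ : c t₁ ≠ 0) :
    (k + 1) * d ≤ wt (∑ t, c t • shiftVec n k a t) := by
  have hblock : ∀ q, d ≤ wt (block (∑ t, c t • shiftVec n k a t) q) := by
    intro q
    obtain ⟨t, htq, hct⟩ : ∃ t, t ≠ q ∧ c t ≠ 0 :=
      if h : t₀ = q then ⟨t₁, h ▸ hne.symm, h₁⟩ else ⟨t₀, h, h₀⟩
    refine hC.1 _ ?_ (block_sum_smul_shiftVec_ne_zero ha htq hct)
    rw [block_sum_smul_shiftVec]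
    exact (Submodule.mem_span_range_iff_exists_fun F).mpr ⟨_, rfl⟩
  calc (k + 1) * d = ∑ _q : Fin (k + 1), d := by simp
    _ ≤ _ := Finset.sum_le_sum fun q _ => hblock q
    _ = _ := (wt_eq_sum_wt_block _).symm

lemma le_wt_of_mem_span_shiftVec {u d : ℕ} {a : Fin k → Fin n → F}
    (ha : LinearIndependent F a) (hb : UBounded a u d) {w : Fin ((k + 1) * n) → F}
    (hw : w ∈ Submodule.span F (Set.range (shiftVec n k a))) (hw0 : w ≠ 0) :
    (k + 1) * d ≤ wt w := by
  obtain ⟨hC, hu, -, hud⟩ := hb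
  obtain ⟨c, rfl⟩ := (Submodule.mem_span_range_iff_exists_fun F).mp hw
  by_cases htwo : ∃ t₀ t₁, t₀ ≠ t₁ ∧ c t₀ ≠ 0 ∧ c t₁ ≠ 0
  · obtain ⟨t₀, t₁, hne, h₀, h₁⟩ := htwo
    exact le_wt_sum_smul_shiftVec_of_two_ne_zero ha hC hne h₀ h₁
  · push Not at htwo
    obtain ⟨t₀, h₀⟩ : ∃ t, c t ≠ 0 := by
      by_contra! h
      simp [h] at hw0
    have hsingle : ∑ t, c t • shiftVec n k a t = c t₀ • shiftVec n k a t₀ :=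
      Fintype.sum_eq_single t₀ fun t ht => by rw [htwo t₀ t (Ne.symm ht) h₀, zero_smul]
    rw [hsingle, wt_smul h₀, wt_shiftVec hu]
    linarith

end

theorem shiftVec_minDist (F : Type*) [Field F] (n k : ℕ)
    (a : Fin k → Fin n → F) (ha : LinearIndependent F a) (u d : ℕ)
    (hb : UBounded a u d) :
    IsMinDist (Submodule.span F (Set.range (shiftVec n k a))) ((k + 1) * d) := by
  have hwt : wt (∑ t, shiftVec n k a t) = (k + 1) * d := by
    rw [wt_sum_shiftVec, hb.2.2.1]
  refine ⟨fun w hw hw0 => le_wt_of_mem_span_shiftVec ha hb hw hw0, ∑ t, shiftVec n k a t,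
    Submodule.sum_mem _ fun t _ => Submodule.subset_span (Set.mem_range_self t), ?_, hwt⟩
  rw [Ne, ← wt_eq_zero_iff, hwt]
  exact mul_ne_zero k.succ_ne_zero hb.1.ne_zero
end

section
/- Iterating the cyclic-shift construction i times starting from an [n,k,d]-code C with basis B yields a code Code(B,i) with length nᵢ = n·∏_{j=1}^i (k+j), dimension kᵢ = k+i, and minimum distance dᵢ ≥ d·∏_{j=1}^i (k+j−1). -/
section Aux
variable {F : Type*} [Field F]

def idxE (K m : ℕ) (s : Fin (K+1)) (j : Fin m) : Fin ((K+1)*m) :=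
  ⟨s.val * m + j.val, by
    have h1 : s.val + 1 ≤ K + 1 := s.isLt
    calc s.val * m + j.val < s.val * m + m := by omega
      _ = (s.val + 1) * m := by ring
      _ ≤ (K+1) * m := Nat.mul_le_mul_right m h1⟩

def blk (K m : ℕ) (s : Fin (K+1)) (v : Fin ((K+1)*m) → F) : Fin m → F :=
  fun j => v (idxE K m s j)

lemma wt_eq_sum_blk (K m : ℕ) (v : Fin ((K+1)*m) → F) :
    wt v = ∑ s : Fin (K+1), wt (blk K m s v) := by
  classical
  rcases Nat.eq_zero_or_pos m with hm | hm
  · subst hm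
    have h1 : wt v = 0 := by
      simp only [wt]
      have : (Finset.univ : Finset (Fin ((K+1)*0))) = ∅ := by
        have : IsEmpty (Fin ((K+1)*0)) := by rw [Nat.mul_zero]; infer_instance
        exact Finset.univ_eq_empty
      rw [this, Finset.filter_empty, Finset.card_empty]
    rw [h1]
    symm
    apply Finset.sum_eq_zero
    intro s _
    simp [wt, blk]
  · have hL : ∀ p : Fin ((K+1)*m), p.val / m < K + 1 :=
      fun p => Nat.div_lt_of_lt_mul (Nat.mul_comm (K+1) m ▸ p.isLt)
    let e : Fin (K+1) × Fin m ≃ Fin ((K+1)*m) :=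
      { toFun := fun x => idxE K m x.1 x.2
        invFun := fun p => (⟨p.val / m, hL p⟩, ⟨p.val % m, Nat.mod_lt _ hm⟩)
        left_inv := by
          rintro ⟨s, j⟩
          have hdiv : (s.val * m + j.val) / m = s.val := by
            rw [Nat.mul_comm, Nat.mul_add_div hm, Nat.div_eq_of_lt j.isLt]; omega
          have hmod : (s.val * m + j.val) % m = j.val := by
            rw [Nat.mul_comm, Nat.mul_add_mod, Nat.mod_eq_of_lt j.isLt]
          simp only [idxE]
          ext <;> simp [hdiv, hmod] <;> omega
        right_inv := by
          intro p
          simp only [idxE]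
          ext
          simp only
          rw [Nat.mul_comm]
          exact Nat.div_add_mod p.val m }
    have h1 : wt v = ∑ p : Fin ((K+1)*m), if v p ≠ 0 then 1 else 0 :=
      Finset.card_filter _ _
    have h2 : ∀ s, wt (blk K m s v) = ∑ j : Fin m, if v (idxE K m s j) ≠ 0 then 1 else 0 :=
      fun s => Finset.card_filter _ _
    rw [h1, ← Equiv.sum_comp e (fun p => if v p ≠ 0 then 1 else 0),
      Fintype.sum_prod_type]
    exact Finset.sum_congr rfl fun s _ => (h2 s).symm

def tauF (K : ℕ) (s : Fin (K+1)) (j : Fin K) : Fin (K+1) :=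
  ⟨if j.val + 1 ≤ s.val then s.val - (j.val + 1) else s.val + (K+1) - (j.val+1), by
    have := s.isLt; have := j.isLt; split_ifs <;> omega⟩

def sigF (K : ℕ) (s t : Fin (K+1)) (h : t ≠ s) : Fin K :=
  ⟨(if t.val ≤ s.val then s.val - t.val else s.val + (K+1) - t.val) - 1, by
    have := s.isLt; have := t.isLt
    have hne : t.val ≠ s.val := fun hh => h (Fin.ext hh)
    split_ifs <;> omega⟩

lemma tauF_ne (K : ℕ) (s : Fin (K+1)) (j : Fin K) : tauF K s j ≠ s := by
  have := s.isLt; have := j.isLt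
  intro h
  have hv := congrArg Fin.val h
  simp only [tauF] at hv
  split_ifs at hv <;> omega

lemma tauF_sigF (K : ℕ) (s t : Fin (K+1)) (h : t ≠ s) : tauF K s (sigF K s t h) = t := by
  have := s.isLt; have := t.isLt
  have hne : t.val ≠ s.val := fun hh => h (Fin.ext hh)
  apply Fin.ext
  simp only [tauF, sigF]
  split_ifs <;> omega

lemma sigF_tauF (K : ℕ) (s : Fin (K+1)) (j : Fin K) (h : tauF K s j ≠ s) :
    sigF K s (tauF K s j) h = j := by
  have := s.isLt; have := j.isLt
  apply Fin.ext
  simp only [tauF, sigF]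
  split_ifs <;> omega

end Aux

section Core
variable {F : Type*} [Field F]

lemma blk_shiftVec {m K : ℕ} (hm : 0 < m) (b : Fin K → Fin m → F) (s t : Fin (K+1)) :
    blk K m s (shiftVec m K b t) =
      if h : t = s then 0 else b (sigF K s t h) := by
  funext j
  have hdiv : (s.val * m + j.val) / m = s.val := by
    rw [Nat.mul_comm, Nat.mul_add_div hm, Nat.div_eq_of_lt j.isLt]
    omega
  have hmod : (s.val * m + j.val) % m = j.val := by
    rw [Nat.mul_comm, Nat.mul_add_mod, Nat.mod_eq_of_lt j.isLt]
  simp only [blk, idxE, shiftVec, hdiv, hmod]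
  by_cases h : t = s
  · rw [dif_pos h, dif_pos (by rw [h])]
    rfl
  · rw [dif_neg h, dif_neg (fun hh : s.val = t.val => h (Fin.ext hh.symm))]
    congr 1 <;> apply Fin.ext <;> simp [sigF]
end Core

section Core2
variable {F : Type*} [Field F]

lemma blk_sum {m K : ℕ} (hm : 0 < m) (b : Fin K → Fin m → F) (lam : Fin (K+1) → F)
    (s : Fin (K+1)) :
    blk K m s (∑ t, lam t • shiftVec m K b t) = ∑ j, lam (tauF K s j) • b j := by
  have h1 : blk K m s (∑ t, lam t • shiftVec m K b t)
      = ∑ t, lam t • blk K m s (shiftVec m K b t) := by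
    funext j
    simp [blk, Finset.sum_apply]
  rw [h1]
  have h2 : ∀ t : Fin (K+1),
      lam t • blk K m s (shiftVec m K b t)
        = lam t • if h : t = s then (0 : Fin m → F) else b (sigF K s t h) := by
    intro t; rw [blk_shiftVec hm]
  rw [Finset.sum_congr rfl fun t _ => h2 t]
  rw [← Finset.sum_erase (f := fun t => lam t • if h : t = s then (0 : Fin m → F) else b (sigF K s t h))
    Finset.univ (a := s) (by simp)]
  apply Finset.sum_bij' (i := fun t ht => sigF K s t (Finset.ne_of_mem_erase ht))
    (j := fun j _ => tauF K s j)
  · intro t _; exact Finset.mem_univ _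
  · intro t ht; exact tauF_sigF K s t _
  · intro jj _; exact sigF_tauF K s jj _
  · intro t ht
    rw [dif_neg (Finset.ne_of_mem_erase ht), tauF_sigF]
  · intro jj _; exact Finset.mem_erase.mpr ⟨tauF_ne K s jj, Finset.mem_univ _⟩

lemma step_lemma {m K D : ℕ} (hK : 1 ≤ K) (b : Fin K → Fin m → F)
    (hli : LinearIndependent F b)
    (hwt : ∀ w ∈ Submodule.span F (Set.range b), w ≠ 0 → D ≤ wt w) :
    LinearIndependent F (shiftVec m K b) ∧
      ∀ w ∈ Submodule.span F (Set.range (shiftVec m K b)), w ≠ 0 →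
        D * K ≤ wt w := by
  classical
  have hm : 0 < m := by
    rcases Nat.eq_zero_or_pos m with h | h
    · exfalso
      apply hli.ne_zero ⟨0, hK⟩
      funext j
      exact absurd j.isLt (by omega)
    · exact h
  have key : ∀ (lam : Fin (K+1) → F) (s : Fin (K+1)),
      blk K m s (∑ t, lam t • shiftVec m K b t) = 0 → ∀ t, t ≠ s → lam t = 0 := by
    intro lam s hz t ht
    rw [blk_sum hm] at hz
    have h2 := (Fintype.linearIndependent_iff.mp hli) (fun j => lam (tauF K s j)) hz
      (sigF K s t ht)
    rwa [tauF_sigF] at h2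
  constructor
  · rw [Fintype.linearIndependent_iff]
    intro lam hsum t
    have h0 : ∀ s : Fin (K+1), blk K m s (∑ t, lam t • shiftVec m K b t) = 0 := by
      intro s; rw [hsum]; funext j; simp [blk]
    rcases ne_or_eq t ⟨0, Nat.succ_pos K⟩ with h | h
    · exact key lam _ (h0 _) t h
    · refine key lam ⟨1, by omega⟩ (h0 _) t ?_
      rw [h]
      simp [Fin.ext_iff]
  · intro w hw hw0
    obtain ⟨lam, rfl⟩ := (Submodule.mem_span_range_iff_exists_fun F).mp hw
    set w := ∑ t, lam t • shiftVec m K b t with hwdef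
    set Z : Finset (Fin (K+1)) := Finset.univ.filter (fun s => blk K m s w = 0) with hZdef
    have hZ : Z.card ≤ 1 := by
      by_contra h
      push_neg at h
      obtain ⟨s1, hs1, s2, hs2, hne⟩ := Finset.one_lt_card.mp h
      have hb1 : blk K m s1 w = 0 := (Finset.mem_filter.mp hs1).2
      have hb2 : blk K m s2 w = 0 := (Finset.mem_filter.mp hs2).2
      apply hw0
      have hall : ∀ t, lam t = 0 := by
        intro t
        rcases ne_or_eq t s1 with h' | h'
        · exact key lam s1 hb1 t h'
        · exact key lam s2 hb2 t (h' ▸ hne)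
      rw [hwdef]
      apply Finset.sum_eq_zero
      intro t _
      rw [hall t, zero_smul]
    have hblk : ∀ s, blk K m s w ∈ Submodule.span F (Set.range b) := by
      intro s
      rw [blk_sum hm]
      exact Submodule.sum_mem _ fun j _ =>
        Submodule.smul_mem _ _ (Submodule.subset_span ⟨j, rfl⟩)
    have hge : ∀ s ∉ Z, D ≤ wt (blk K m s w) := by
      intro s hs
      have hne0 : blk K m s w ≠ 0 := by
        intro h; exact hs (Finset.mem_filter.mpr ⟨Finset.mem_univ _, h⟩)
      exact hwt _ (hblk s) hne0
    calc D * K = K * D := Nat.mul_comm _ _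
      _ ≤ (Finset.univ \ Z).card * D := by
            apply Nat.mul_le_mul_right
            rw [Finset.card_sdiff_of_subset (Finset.subset_univ _), Finset.card_univ,
              Fintype.card_fin]
            omega
      _ = ∑ _s ∈ Finset.univ \ Z, D := by rw [Finset.sum_const, smul_eq_mul]
      _ ≤ ∑ s ∈ Finset.univ \ Z, wt (blk K m s w) :=
            Finset.sum_le_sum fun s hs => hge s (Finset.mem_sdiff.mp hs).2
      _ ≤ ∑ s, wt (blk K m s w) :=
            Finset.sum_le_sum_of_subset (Finset.sdiff_subset)
      _ = wt w := (wt_eq_sum_blk K m w).symm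
end Core2

/-- Length of the code obtained after `i` applications of the construction. -/
def iterLen (n k : ℕ) : ℕ → ℕ
  | 0 => n
  | (i + 1) => (k + i + 1) * iterLen n k i

/-- `Basis(B, i)`: the basis obtained by `i` iterated applications of the construction. -/
def iterBasis {F : Type*} [Field F] (n k : ℕ) (a : Fin k → Fin n → F) :
    (i : ℕ) → Fin (k + i) → Fin (iterLen n k i) → F
  | 0 => a
  | (i + 1) => shiftVec (iterLen n k i) (k + i) (iterBasis n k a i)

theorem iterCode_params (F : Type*) [Field F] (n k : ℕ)
    (a : Fin k → Fin n → F) (ha : LinearIndependent F a) (d : ℕ)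
    (hd : IsMinDist (Submodule.span F (Set.range a)) d) (i : ℕ) :
    iterLen n k i = n * ∏ j ∈ Finset.range i, (k + j + 1) ∧
    Module.finrank F (Submodule.span F (Set.range (iterBasis n k a i))) = k + i ∧
    ∀ w ∈ Submodule.span F (Set.range (iterBasis n k a i)), w ≠ 0 →
      d * ∏ j ∈ Finset.range i, (k + j) ≤ wt w := by
  have hk : 1 ≤ k := by
    obtain ⟨w, hw, hw0, _⟩ := hd.2
    by_contra h
    have hk0 : k = 0 := by omega
    subst hk0
    have hr : Set.range a = ∅ := Set.range_eq_empty a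
    rw [hr, Submodule.span_empty, Submodule.mem_bot] at hw
    exact hw0 hw
  have aux : ∀ i : ℕ, LinearIndependent F (iterBasis n k a i) ∧
      ∀ w ∈ Submodule.span F (Set.range (iterBasis n k a i)), w ≠ 0 →
        d * ∏ j ∈ Finset.range i, (k + j) ≤ wt w := by
    intro i
    induction i with
    | zero =>
      refine ⟨ha, ?_⟩
      intro w hw hw0
      have h := hd.1 w hw hw0
      simp only [Finset.range_zero, Finset.prod_empty, mul_one]
      exact h
    | succ i ih =>
      have hstep := step_lemma (m := iterLen n k i) (K := k + i)
        (D := d * ∏ j ∈ Finset.range i, (k + j)) (by omega)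
        (iterBasis n k a i) ih.1 ih.2
      constructor
      · exact hstep.1
      · intro w hw hw0
        have h2 := hstep.2 w hw hw0
        calc d * ∏ j ∈ Finset.range (i+1), (k + j)
            = (d * ∏ j ∈ Finset.range i, (k + j)) * (k + i) := by
              rw [Finset.prod_range_succ, Nat.mul_assoc]
          _ ≤ wt w := h2
  refine ⟨?_, ?_, (aux i).2⟩
  · induction i with
    | zero => simp [iterLen]
    | succ i ih =>
      show (k + i + 1) * iterLen n k i = _
      rw [ih, Finset.prod_range_succ]
      ring
  · rw [finrank_span_eq_card (aux i).1, Fintype.card_fin]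
end

section
/- For i ≥ 2, the span C(i) of the first 2i−1 columns of the recursively defined matrix Aᵢ is an F-linear code of length 2i, dimension 2i−1, and minimum distance 1, which is (2i−1)-bounded relative to the basis (a₁,…,a_{2i−1}). -/
lemma neg_one_pow_mod {F : Type*} [Field F] (a : ℕ) : (-1:F)^a = (-1)^(a % 2) := by
  conv_lhs => rw [← Nat.div_add_mod a 2]
  rw [pow_add, pow_mul]
  norm_num

lemma neg_one_pow_congr_mod {F : Type*} [Field F] {a b : ℕ} (h : a % 2 = b % 2) :
    (-1:F)^a = (-1)^b := by rw [neg_one_pow_mod, h, ← neg_one_pow_mod]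

lemma B1_apply {F : Type*} [Field F] (a b : Fin 2) :
    B1 F a b = (-1:F)^((a:ℕ)+(b:ℕ)) := by
  fin_cases a <;> fin_cases b <;> norm_num [B1]

lemma Bmat_apply {F : Type*} [Field F] (n : ℕ) (a : Fin 2) (b : Fin (2*n)) :
    Bmat F n a b = (-1:F)^((a:ℕ)+(b:ℕ)) := by
  rw [Bmat, B1_apply]
  exact neg_one_pow_congr_mod (show ((a:ℕ) + (b:ℕ) % 2) % 2 = ((a:ℕ) + (b:ℕ)) % 2 by omega)

lemma A1_apply {F : Type*} [Field F] (a b : Fin 2) :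
    A1 F a b = if (a:ℕ) = b then 0 else if (a:ℕ) < b then (-1:F)^((a:ℕ)+(b:ℕ)) else -(-1:F)^((a:ℕ)+(b:ℕ)) := by
  fin_cases a <;> fin_cases b <;> norm_num [A1]

lemma amat_apply {F : Type*} [Field F] : ∀ (i : ℕ) (r c : Fin (2*i)),
    Amat F i r c = if (r:ℕ) = c then 0 else
      if (r:ℕ) < c then (-1:F)^((r:ℕ)+(c:ℕ)) else -(-1:F)^((r:ℕ)+(c:ℕ))
  | 0 => fun r => r.elim0
  | 1 => by
    intro r c
    simp only [Amat, Matrix.reindex_apply, Matrix.submatrix_apply, finCongr_symm,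
      finCongr_apply]
    rw [show (A1 F (Fin.cast (by norm_num) r) (Fin.cast (by norm_num) c)) =
      A1 F ⟨(r:ℕ), by omega⟩ ⟨(c:ℕ), by omega⟩ by rfl]
    rw [A1_apply]
  | (i + 2) => by
    intro r c
    have hval : ∀ (x : Fin (2*(i+2))) (s : Fin 2 ⊕ Fin (2*(i+1))),
        (finSumFinEquiv.trans (finCongr (by omega : 2 + 2*(i+1) = 2*(i+2)))).symm x = s →
        (x:ℕ) = Sum.elim (fun a : Fin 2 => (a:ℕ)) (fun b : Fin (2*(i+1)) => 2 + (b:ℕ)) s := by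
      intro x s hs
      have := (Equiv.symm_apply_eq _).mp hs
      subst this
      rcases s with a | b
      · simp [finSumFinEquiv_apply_left, Fin.castAdd]
      · simp [finSumFinEquiv_apply_right, Fin.natAdd]
    simp only [Amat, Matrix.reindex_apply, Matrix.submatrix_apply]
    rcases hr' : (finSumFinEquiv.trans (finCongr (by omega))).symm r with a | a <;>
      rcases hc' : (finSumFinEquiv.trans (finCongr (by omega))).symm c with b | b <;>
      first
      | (rw [Matrix.fromBlocks_apply₁₁, A1_apply]
         have ha := hval r _ hr'; have hb := hval c _ hc'
         simp only [Sum.elim_inl] at ha hb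
         have h1 := a.isLt; have h2 := b.isLt
         rcases Nat.lt_trichotomy (r:ℕ) (c:ℕ) with h | h | h
         · rw [if_neg (by omega), if_pos (by omega), if_neg (by omega), if_pos h]
           exact neg_one_pow_congr_mod (by omega)
         · rw [if_pos (by omega), if_pos (by omega)]
         · rw [if_neg (by omega), if_neg (by omega), if_neg (by omega), if_neg (by omega)]
           exact congrArg Neg.neg (neg_one_pow_congr_mod (by omega)))
      | (rw [Matrix.fromBlocks_apply₁₂, Bmat_apply]
         have ha := hval r _ hr'; have hb := hval c _ hc'
         simp only [Sum.elim_inl, Sum.elim_inr] at ha hb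
         have h1 := a.isLt
         rw [if_neg (by omega), if_pos (by omega)]
         exact neg_one_pow_congr_mod (by omega))
      | (rw [Matrix.fromBlocks_apply₂₁]
         have ha := hval r _ hr'; have hb := hval c _ hc'
         simp only [Sum.elim_inl, Sum.elim_inr] at ha hb
         have h2 := b.isLt
         rw [show (-(Bmat F (i+1)).transpose) a b = -(Bmat F (i+1) b a) from rfl, Bmat_apply]
         rw [if_neg (by omega), if_neg (by omega)]
         exact congrArg Neg.neg (neg_one_pow_congr_mod (by omega)))
      | (rw [Matrix.fromBlocks_apply₂₂, amat_apply (i+1)]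
         have ha := hval r _ hr'; have hb := hval c _ hc'
         simp only [Sum.elim_inr] at ha hb
         rcases Nat.lt_trichotomy (r:ℕ) (c:ℕ) with h | h | h
         · rw [if_neg (by omega), if_pos (by omega), if_neg (by omega), if_pos h]
           exact neg_one_pow_congr_mod (by omega)
         · rw [if_pos (by omega), if_pos (by omega)]
         · rw [if_neg (by omega), if_neg (by omega), if_neg (by omega), if_neg (by omega)]
           exact congrArg Neg.neg (neg_one_pow_congr_mod (by omega)))

open Finset in
section
variable {F : Type*} [Field F]

noncomputable def S (F : Type*) [Field F] (m : ℕ) : F := if Even m then 0 else 1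

lemma sum_pow_range (m : ℕ) : ∑ n ∈ range m, (-1:F)^n = S F m := by
  rw [S, neg_one_geom_sum]

lemma sum_pow_Ico {a b : ℕ} (h : a ≤ b) : ∑ n ∈ Ico a b, (-1:F)^n = S F b - S F a := by
  rw [Finset.sum_Ico_eq_sub _ h, sum_pow_range, sum_pow_range]

lemma S_odd {m : ℕ} (h : ¬ Even m) : S F m = 1 := by rw [S, if_neg h]

lemma amat_col_sum (i : ℕ) (hi : 1 ≤ i) (r : Fin (2*i)) :
    ∑ j : Fin (2*i-1), Amat F i r (Fin.castLE (by omega) j) =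
      if (r:ℕ) = 2*i-1 then 1 else 0 := by
  have hr := r.isLt
  have hodd : ¬ Even (2*i-1) := by rw [Nat.even_iff]; omega
  rw [show (∑ j : Fin (2*i-1), Amat F i r (Fin.castLE (by omega) j)) =
      ∑ n ∈ range (2*i-1), (if (r:ℕ) = n then (0:F) else
        if (r:ℕ) < n then (-1:F)^((r:ℕ)+n) else -(-1:F)^((r:ℕ)+n)) from by
    rw [← Fin.sum_univ_eq_sum_range]
    exact Finset.sum_congr rfl fun j _ => by rw [amat_apply]; rfl]
  rcases eq_or_ne (r:ℕ) (2*i-1) with h | h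
  · rw [if_pos h]
    have he : ∀ n ∈ range (2*i-1), (if (r:ℕ) = n then (0:F) else
        if (r:ℕ) < n then (-1:F)^((r:ℕ)+n) else -(-1:F)^((r:ℕ)+n)) = -((-1)^(r:ℕ) * (-1)^n) := by
      intro n hn; rw [mem_range] at hn
      rw [if_neg (by omega), if_neg (by omega), pow_add]
    rw [Finset.sum_congr rfl he]
    simp only [Finset.sum_neg_distrib, ← Finset.mul_sum, sum_pow_range]
    rw [S_odd hodd, mul_one, h, Odd.neg_one_pow ⟨i-1, by omega⟩, neg_neg]
  · rw [if_neg h]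
    have hrlt : (r:ℕ) < 2*i-1 := by omega
    rw [range_eq_Ico, ← Finset.sum_Ico_consecutive _ (Nat.zero_le (r:ℕ)) (le_of_lt hrlt),
      Finset.sum_eq_sum_Ico_succ_bot hrlt]
    have h1 : ∀ n ∈ Ico 0 (r:ℕ), (if (r:ℕ) = n then (0:F) else
        if (r:ℕ) < n then (-1:F)^((r:ℕ)+n) else -(-1:F)^((r:ℕ)+n)) = -((-1)^(r:ℕ) * (-1)^n) := by
      intro n hn; rw [mem_Ico] at hn
      rw [if_neg (by omega), if_neg (by omega), pow_add]
    have h2 : ∀ n ∈ Ico ((r:ℕ)+1) (2*i-1), (if (r:ℕ) = n then (0:F) else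
        if (r:ℕ) < n then (-1:F)^((r:ℕ)+n) else -(-1:F)^((r:ℕ)+n)) = (-1)^(r:ℕ) * (-1)^n := by
      intro n hn; rw [mem_Ico] at hn
      rw [if_neg (by omega), if_pos (by omega), pow_add]
    rw [Finset.sum_congr rfl h1, Finset.sum_congr rfl h2, if_pos rfl]
    simp only [Finset.sum_neg_distrib, ← Finset.mul_sum]
    rw [show Ico 0 (r:ℕ) = range (r:ℕ) from (range_eq_Ico _).symm, sum_pow_range,
      sum_pow_Ico (by omega), S_odd hodd]
    have hS : S F ((r:ℕ)+1) + S F (r:ℕ) = 1 := by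
      rcases Nat.even_or_odd (r:ℕ) with he | ho
      · rw [S, S, if_pos he, if_neg (by simp [Nat.even_add_one, he])]; ring
      · have := Nat.not_even_iff_odd.mpr ho
        rw [S, S, if_neg this, if_pos (by simp [Nat.even_add_one, this])]; ring
    linear_combination (-(-1:F)^((r:ℕ))) * hS

lemma amat_pair (i : ℕ) (j : ℕ) (hj : j + 1 < 2*i) (r : Fin (2*i)) :
    Amat F i r ⟨j, by omega⟩ + Amat F i r ⟨j+1, hj⟩ =
      (if (r:ℕ) = j+1 then 1 else 0) - (if (r:ℕ) = j then 1 else 0) := by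
  rw [amat_apply, amat_apply]
  simp only [Fin.val_mk]
  have hr := r.isLt
  rcases Nat.lt_trichotomy (r:ℕ) j with h | h | h
  · rw [if_neg (by omega), if_pos (by omega), if_neg (by omega), if_pos (by omega),
      if_neg (by omega), if_neg (by omega)]
    rw [show (r:ℕ) + (j+1) = ((r:ℕ)+j) + 1 by omega, pow_succ]
    ring
  · rw [if_pos (by omega), if_neg (by omega), if_pos (by omega), if_neg (by omega),
      if_pos (by omega)]
    rw [show (r:ℕ) + (j+1) = 2*j + 1 by omega, Odd.neg_one_pow ⟨j, by omega⟩]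
    ring
  · rcases eq_or_ne (r:ℕ) (j+1) with he | hne
    · rw [if_neg (by omega), if_neg (by omega), if_pos he, if_pos he, if_neg (by omega)]
      rw [show (r:ℕ) + j = 2*j + 1 by omega, Odd.neg_one_pow ⟨j, by omega⟩, neg_neg]
      ring
    · rw [if_neg (by omega), if_neg (by omega), if_neg (by omega), if_neg (by omega),
        if_neg hne, if_neg (by omega)]
      rw [show (r:ℕ) + (j+1) = ((r:ℕ)+j) + 1 by omega, pow_succ]
      ring
end

lemma amat_ne_zero_iff {F : Type*} [Field F] (i : ℕ) (r c : Fin (2*i)) :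
    Amat F i r c ≠ 0 ↔ r ≠ c := by
  rw [amat_apply, Fin.ne_iff_vne]
  rcases Nat.lt_trichotomy (r:ℕ) (c:ℕ) with h | h | h
  · rw [if_neg (by omega), if_pos h]
    exact ⟨fun _ => by omega, fun _ => pow_ne_zero _ (by norm_num)⟩
  · rw [if_pos h]; simp [h]
  · rw [if_neg (by omega), if_neg (by omega)]
    exact ⟨fun _ => by omega, fun _ => neg_ne_zero.mpr (pow_ne_zero _ (by norm_num))⟩

lemma sum_mul_indicator {F : Type*} [Field F] {n : ℕ} (w : Fin n → F) (m : ℕ) (hm : m < n) :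
    ∑ c : Fin n, w c * (if (c:ℕ) = m then (1:F) else 0) = w ⟨m, hm⟩ := by
  rw [Finset.sum_eq_single (⟨m, hm⟩ : Fin n)]
  · simp
  · intro b _ hb
    rw [if_neg (fun hv => hb (Fin.ext hv)), mul_zero]
  · intro habs; exact absurd (Finset.mem_univ _) habs

lemma Lsum1 {F : Type*} [Field F] {n : ℕ} (r : Fin n) (j : ℕ) (h1 : j < n) (h2 : j+1 < n) :
    ∑ c : Fin n, (if (c:ℕ) ≤ (r:ℕ) then (1:F) else 0) *
      ((if (c:ℕ) = j then (1:F) else 0) - (if (c:ℕ) = j+1 then 1 else 0)) =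
    if (r:ℕ) = j then 1 else 0 := by
  have step1 : ∀ c : Fin n, (if (c:ℕ) ≤ (r:ℕ) then (1:F) else 0) *
        ((if (c:ℕ) = j then (1:F) else 0) - (if (c:ℕ) = j+1 then 1 else 0)) =
      (fun c : Fin n => if (c:ℕ) ≤ (r:ℕ) then (1:F) else 0) c *
        (if (c:ℕ) = j then (1:F) else 0) -
      (fun c : Fin n => if (c:ℕ) ≤ (r:ℕ) then (1:F) else 0) c *
        (if (c:ℕ) = j+1 then (1:F) else 0) := fun c => mul_sub _ _ _
  rw [Finset.sum_congr rfl fun c _ => step1 c, Finset.sum_sub_distrib,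
    sum_mul_indicator (fun c : Fin n => if (c:ℕ) ≤ (r:ℕ) then (1:F) else 0) j h1,
    sum_mul_indicator (fun c : Fin n => if (c:ℕ) ≤ (r:ℕ) then (1:F) else 0) (j+1) h2]
  have hr := r.isLt
  rw [show (((⟨j, h1⟩ : Fin n)):ℕ) = j from rfl, show (((⟨j+1, h2⟩ : Fin n)):ℕ) = j+1 from rfl]
  split_ifs <;> first | (exfalso; omega) | norm_num

lemma Lsum2 {F : Type*} [Field F] {n : ℕ} (r : Fin n) (m : ℕ) (hm : m < n) :
    ∑ c : Fin n, (if (c:ℕ) ≤ (r:ℕ) then (1:F) else 0) * (if (c:ℕ) = m then (1:F) else 0) =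
    if m ≤ (r:ℕ) then 1 else 0 := by
  rw [sum_mul_indicator (fun c : Fin n => if (c:ℕ) ≤ (r:ℕ) then (1:F) else 0) m hm]

theorem codeCi_params (F : Type*) [Field F] (i : ℕ) (hi : 2 ≤ i) :
    Module.finrank F (Submodule.span F
      (Set.range (fun j : Fin (2 * i - 1) => fun r : Fin (2 * i) =>
        Amat F i r (Fin.castLE (by omega) j)))) = 2 * i - 1 ∧
    IsMinDist (Submodule.span F
      (Set.range (fun j : Fin (2 * i - 1) => fun r : Fin (2 * i) =>
        Amat F i r (Fin.castLE (by omega) j)))) 1 ∧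
    UBounded (fun j : Fin (2 * i - 1) => fun r : Fin (2 * i) =>
        Amat F i r (Fin.castLE (by omega) j)) (2 * i - 1) 1 := by
  classical
  set a : Fin (2*i-1) → Fin (2*i) → F :=
    fun j => fun r => Amat F i r (Fin.castLE (by omega) j) with ha
  set C : Submodule F (Fin (2*i) → F) := Submodule.span F (Set.range a) with hC
  have haC : ∀ j, a j ∈ C := fun j => Submodule.subset_span ⟨j, rfl⟩
  -- the sum of the columns
  have hsum : (∑ j, a j) = fun r : Fin (2*i) => if (r:ℕ) = 2*i-1 then (1:F) else 0 := by
    funext r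
    rw [Finset.sum_apply]
    exact amat_col_sum i (by omega) r
  have hsumC : (fun r : Fin (2*i) => if (r:ℕ) = 2*i-1 then (1:F) else 0) ∈ C := by
    rw [← hsum]; exact Submodule.sum_mem _ fun j _ => haC j
  -- pairwise differences
  have hdiff : ∀ (j : ℕ) (hj : j + 1 < 2*i-1),
      (fun r : Fin (2*i) => (if (r:ℕ) = j then (1:F) else 0) - (if (r:ℕ) = j+1 then 1 else 0)) ∈ C := by
    intro j hj
    have h1 : (fun r : Fin (2*i) => (if (r:ℕ) = j then (1:F) else 0) - (if (r:ℕ) = j+1 then 1 else 0))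
        = -(a ⟨j, by omega⟩ + a ⟨j+1, hj⟩) := by
      funext r
      have := amat_pair (F := F) i j (by omega) r
      simp only [ha, Pi.neg_apply, Pi.add_apply]
      rw [show (Fin.castLE (by omega : 2*i-1 ≤ 2*i) (⟨j, by omega⟩ : Fin (2*i-1))) = ⟨j, by omega⟩ from rfl,
        show (Fin.castLE (by omega : 2*i-1 ≤ 2*i) (⟨j+1, hj⟩ : Fin (2*i-1))) = ⟨j+1, by omega⟩ from rfl,
        this]
      ring
    rw [h1]
    exact neg_mem (add_mem (haC _) (haC _))
  -- weights
  have hwt : ∀ j, wt (a j) = 2*i-1 := by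
    intro j
    have : (Finset.univ.filter fun p => a j p ≠ 0) = Finset.univ.erase (Fin.castLE (by omega) j) := by
      ext r
      simp only [Finset.mem_filter, Finset.mem_univ, true_and, Finset.mem_erase, and_true]
      exact amat_ne_zero_iff i r _
    rw [wt]
    simp_rw [this]
    rw [Finset.card_erase_of_mem (Finset.mem_univ _)]
    simp
  have hwts : wt (∑ j, a j) = 1 := by
    rw [hsum, wt]
    have : (Finset.univ.filter fun p : Fin (2*i) =>
        (if (p:ℕ) = 2*i-1 then (1:F) else 0) ≠ 0) = {(⟨2*i-1, by omega⟩ : Fin (2*i))} := by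
      ext r
      simp only [Finset.mem_filter, Finset.mem_univ, true_and, Finset.mem_singleton]
      constructor
      · intro h
        by_contra hne
        rw [if_neg (fun hv => hne (Fin.ext hv))] at h
        exact h rfl
      · intro h; subst h; simp
    simp_rw [this]
    simp
  have hne : (∑ j, a j) ≠ 0 := by
    intro h
    rw [hsum] at h
    have := congrFun h ⟨2*i-1, by omega⟩
    simp at this
  have hmin : IsMinDist C 1 := by
    constructor
    · intro w _ hw
      rw [Nat.one_le_iff_ne_zero]
      intro h0
      apply hw
      funext p
      have := Finset.card_eq_zero.mp h0
      have h2 := Finset.filter_eq_empty_iff.mp this (Finset.mem_univ p)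
      exact not_not.mp h2
    · exact ⟨∑ j, a j, Submodule.sum_mem _ fun j _ => haC j, hne, hwts⟩
  -- linear independence family
  set σ : Fin (2*i-1) → Fin (2*i) := fun j =>
    if (j:ℕ) < 2*i-2 then Fin.castLE (by omega) j else ⟨2*i-1, by omega⟩ with hσ
  have hσinj : Function.Injective σ := by
    intro x y hxy
    have hx := x.isLt; have hy := y.isLt
    simp only [hσ] at hxy
    split_ifs at hxy with h1 h2 <;>
      (have hval := congrArg Fin.val hxy
       simp only [Fin.coe_castLE] at hval
       exact Fin.ext (by omega))
  set g : Fin (2*i-1) → Fin (2*i) → F := fun j =>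
    if (j:ℕ) < 2*i-2 then
      (fun r : Fin (2*i) => (if (r:ℕ) = (j:ℕ) then (1:F) else 0) - (if (r:ℕ) = (j:ℕ)+1 then 1 else 0))
    else (fun r : Fin (2*i) => if (r:ℕ) = 2*i-1 then 1 else 0) with hg
  have hgC : ∀ j, g j ∈ C := by
    intro j
    simp only [hg]
    split_ifs with h
    · exact hdiff (j:ℕ) (by omega)
    · exact hsumC
  -- g as combination of Pi.singles
  have hg1 : ∀ (m : ℕ) (hm : m < 2*i),
      (fun r : Fin (2*i) => if (r:ℕ) = m then (1:F) else 0) = Pi.single (⟨m, hm⟩ : Fin (2*i)) 1 := by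
    intro m hm
    funext r
    rw [Pi.single_apply]
    congr 1
    simp [Fin.ext_iff]
  set L : Matrix (Fin (2*i)) (Fin (2*i)) F := fun r c => if (c:ℕ) ≤ (r:ℕ) then 1 else 0 with hL
  have hTg : ∀ j, L.mulVecLin (g j) = Pi.single (σ j) (1:F) := by
    have key : ∀ (v : Fin (2*i) → F) (r : Fin (2*i)), L.mulVecLin v r =
        ∑ c : Fin (2*i), (if (c:ℕ) ≤ (r:ℕ) then (1:F) else 0) * v c := by
      intro v r
      rw [Matrix.mulVecLin_apply]
      simp only [Matrix.mulVec, dotProduct, hL]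
    intro j
    have hjlt := j.isLt
    funext r
    have hr := r.isLt
    rw [key]
    by_cases h : (j:ℕ) < 2*i-2
    · have hgj : g j = fun r : Fin (2*i) =>
          (if (r:ℕ) = (j:ℕ) then (1:F) else 0) - (if (r:ℕ) = (j:ℕ)+1 then 1 else 0) := by
        simp only [hg, if_pos h]
      have hσj : σ j = Fin.castLE (by omega : 2*i-1 ≤ 2*i) j := by simp only [hσ, if_pos h]
      rw [hgj, hσj, Pi.single_apply, Lsum1 r (j:ℕ) (by omega) (by omega)]
      have hrj : (r = Fin.castLE (by omega : 2*i-1 ≤ 2*i) j) ↔ ((r:ℕ) = (j:ℕ)) := by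
        rw [Fin.ext_iff]; try exact Iff.rfl
      rw [if_congr hrj rfl rfl]
    · have hgj : g j = fun r : Fin (2*i) => if (r:ℕ) = 2*i-1 then (1:F) else 0 := by
        simp only [hg, if_neg h]
      have hσj : σ j = (⟨2*i-1, by omega⟩ : Fin (2*i)) := by simp only [hσ, if_neg h]
      rw [hgj, hσj, Pi.single_apply, Lsum2 r (2*i-1) (by omega)]
      have hrj : (r = (⟨2*i-1, by omega⟩ : Fin (2*i))) ↔ ((r:ℕ) = 2*i-1) := by
        rw [Fin.ext_iff]; try exact Iff.rfl
      rw [if_congr hrj rfl rfl]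
      try split_ifs <;> first | (exfalso; omega) | rfl
  have hgind : LinearIndependent F g := by
    apply LinearIndependent.of_comp L.mulVecLin
    have base : LinearIndependent F (fun x : Fin (2*i) => Pi.single x (1:F)) := by
      have hb := (Pi.basisFun F (Fin (2*i))).linearIndependent
      convert hb using 1
      funext x
      exact (Pi.basisFun_apply F (Fin (2*i)) x).symm
    have := base.comp σ hσinj
    convert this using 1
    case e'_5 => rfl
    funext j
    simp only [Function.comp_apply]
    exact hTg j
  -- finrank
  have hrank : Module.finrank F C = 2*i-1 := by
    apply le_antisymm
    · have := finrank_range_le_card (R := F) a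
      rw [Set.finrank] at this
      simpa using this
    · have hle : Submodule.span F (Set.range g) ≤ C := by
        rw [Submodule.span_le]
        rintro _ ⟨j, rfl⟩
        exact hgC j
      have := Submodule.finrank_mono (R := F) hle
      rw [finrank_span_eq_card hgind] at this
      simpa using this
  refine ⟨hrank, hmin, hmin, hwt, hwts, ?_⟩
  have h3 : 3 ≤ 2*i-1 := by omega
  calc 1 * (2*i-1+1) = 2*i := by omega
    _ ≤ 3 * (2*i-1) := by omega
    _ ≤ (2*i-1) * (2*i-1) := Nat.mul_le_mul_right _ h3
end
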